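/- Let F be a marked set over a weakly noetherian reduction structure 𝒥. If F is a marked basis, then →_{F𝒥} is confluent. Conversely, if →_{F𝒥} is confluent, then the following are equivalent: (a) F is a marked basis; (b) (F) = ⟨τF⟩; (c) for each x^α ∈ M and each x^γ ∈ 𝒯 \ τ_α, every reduced l with x^γ f_α →_* l equals 0. -/

import Mathlib

open MvPolynomial

/-- Terms (monomials) in `n` variables, identified with their exponent vectors. -/
abbrev Term (n : ℕ) := Fin n →₀ ℕ

/-- A reduction structure `𝒥 = (M, λ, τ)`. -/
structure RedStruct (n : ℕ) where
  M : Finset (Term n)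
  tau : Term n → Set (Term n)
  lam : Term n → Finset (Term n)
  tau_orderIdeal : ∀ α ∈ M, ∀ η ∈ tau α, ∀ η' : Term n, η' ≤ η → η' ∈ tau α
  cover : ∀ β : Term n, (∃ α ∈ M, ∃ η, β = α + η) ↔ (∃ α ∈ M, ∃ η ∈ tau α, β = α + η)
  lam_tail : ∀ α ∈ M, ∀ γ ∈ lam α, ¬ ∃ η ∈ tau α, γ = α + η

namespace RedStruct

variable {n : ℕ}

/-- The cone of `x^α`. -/
def cone (𝒥 : RedStruct n) (α : Term n) : Set (Term n) := {β | ∃ η ∈ 𝒥.tau α, β = α + η}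

/-- The semigroup ideal `J` generated by `M`. -/
def idealJ (𝒥 : RedStruct n) : Set (Term n) := {β | ∃ α ∈ 𝒥.M, ∃ η, β = α + η}

def hasMaximalCones (𝒥 : RedStruct n) : Prop := ∀ α ∈ 𝒥.M, 𝒥.tau α = Set.univ

def hasDisjointCones (𝒥 : RedStruct n) : Prop :=
  ∀ α ∈ 𝒥.M, ∀ α' ∈ 𝒥.M, α ≠ α' → 𝒥.cone α ∩ 𝒥.cone α' = ∅

/-- `𝒥'` is a substructure of `𝒥`: same `M`, same tails, smaller multiplicative sets. -/
def IsSubstructure (𝒥' 𝒥 : RedStruct n) : Prop :=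
  𝒥'.M = 𝒥.M ∧ 𝒥'.lam = 𝒥.lam ∧ ∀ α ∈ 𝒥.M, 𝒥'.tau α ⊆ 𝒥.tau α

/-- An ordered reduction structure: there are a well-founded strictly (partially) ordered set
`(W, ≺)` and an ordering function `φ` with `φ(x^{γ+η}) ≺ φ(x^{α+η})` for all `x^α ∈ M`,
`x^γ ∈ λ_α`, `x^η ∈ τ_α`. -/
def IsOrdered (𝒥 : RedStruct n) : Prop :=
  ∃ (W : Type) (lt : W → W → Prop) (φ : Term n → W),
    IsStrictOrder W lt ∧ WellFounded lt ∧
      ∀ α ∈ 𝒥.M, ∀ γ ∈ 𝒥.lam α, ∀ η ∈ 𝒥.tau α, lt (φ (γ + η)) (φ (α + η))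

end RedStruct

variable {n : ℕ}

/-- A marked set on `𝒥` over the ring `A`: each `f_α = x^α + Σ_{γ ∈ λ_α} c γ x^γ`. -/
def IsMarkedSet {A : Type*} [CommRing A] (𝒥 : RedStruct n)
    (F : Term n → MvPolynomial (Fin n) A) : Prop :=
  ∀ α ∈ 𝒥.M, MvPolynomial.coeff α (F α) = 1 ∧
    ∀ β : Term n, MvPolynomial.coeff β (F α) ≠ 0 → β = α ∨ β ∈ 𝒥.lam α

/-- One base step of reduction, allowing multipliers from the family `σ`. -/
def RedStep {A : Type*} [CommRing A] (𝒥 : RedStruct n) (σ : Term n → Set (Term n))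
    (F : Term n → MvPolynomial (Fin n) A) (g h : MvPolynomial (Fin n) A) : Prop :=
  ∃ α ∈ 𝒥.M, ∃ η ∈ σ α, MvPolynomial.coeff (α + η) g ≠ 0 ∧
    h = g - MvPolynomial.monomial η (MvPolynomial.coeff (α + η) g) * F α

/-- The reduction relation `→_{F𝒥}`. -/
def Red {A : Type*} [CommRing A] (𝒥 : RedStruct n) (F : Term n → MvPolynomial (Fin n) A) :
    MvPolynomial (Fin n) A → MvPolynomial (Fin n) A → Prop :=
  RedStep 𝒥 𝒥.tau F

/-- The reflexive-transitive closure `→_*` of `→_{F𝒥}`. -/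
def RedStar {A : Type*} [CommRing A] (𝒥 : RedStruct n) (F : Term n → MvPolynomial (Fin n) A) :
    MvPolynomial (Fin n) A → MvPolynomial (Fin n) A → Prop :=
  Relation.ReflTransGen (Red 𝒥 F)

/-- A polynomial is reduced if its support is contained in `N(J)`. -/
def IsReducedPoly {A : Type*} [CommRing A] (𝒥 : RedStruct n)
    (l : MvPolynomial (Fin n) A) : Prop :=
  ∀ β ∈ l.support, β ∉ 𝒥.idealJ

/-- A relation is noetherian: there is no infinite chain of steps. -/
def RelNoetherian {X : Type*} (r : X → X → Prop) : Prop :=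
  ¬ ∃ f : ℕ → X, ∀ i, r (f i) (f (i + 1))

/-- `𝒥` is noetherian over `A`: for every marked set `F` on `𝒥` over `A`, every sequence
of `→_{F𝒥}` reduction steps terminates. -/
def RedStruct.IsNoetherianOver (𝒥 : RedStruct n) (A : Type*) [CommRing A] : Prop :=
  ∀ F : Term n → MvPolynomial (Fin n) A, IsMarkedSet 𝒥 F → RelNoetherian (Red 𝒥 F)

/-- `𝒥` is weakly noetherian over `A`: it has a noetherian substructure. -/
def RedStruct.IsWeaklyNoetherianOver (𝒥 : RedStruct n) (A : Type*) [CommRing A] : Prop :=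
  ∃ 𝒥' : RedStruct n, RedStruct.IsSubstructure 𝒥' 𝒥 ∧ 𝒥'.IsNoetherianOver A

/-- The set `σF = {x^η f_α : x^α ∈ M, x^η ∈ σ_α}`. -/
def tauF {A : Type*} [CommRing A] (𝒥 : RedStruct n) (σ : Term n → Set (Term n))
    (F : Term n → MvPolynomial (Fin n) A) : Set (MvPolynomial (Fin n) A) :=
  {p | ∃ α ∈ 𝒥.M, ∃ η ∈ σ α, p = MvPolynomial.monomial η (1 : A) * F α}

/-- The `A`-submodule `⟨σF⟩` generated by `σF`. -/
noncomputable def tauSpan {A : Type*} [CommRing A] (𝒥 : RedStruct n) (σ : Term n → Set (Term n))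
    (F : Term n → MvPolynomial (Fin n) A) : Submodule A (MvPolynomial (Fin n) A) :=
  Submodule.span A (tauF 𝒥 σ F)

/-- The `A`-submodule `⟨N(J)⟩` spanned by the terms outside `J`. -/
noncomputable def NJSpan (𝒥 : RedStruct n) (A : Type*) [CommRing A] :
    Submodule A (MvPolynomial (Fin n) A) :=
  Submodule.span A {p | ∃ β ∉ 𝒥.idealJ, p = MvPolynomial.monomial β (1 : A)}

/-- `F` is a marked basis: `(F) ⊕ ⟨N(J)⟩ = P` as `A`-modules. -/
def IsMarkedBasis {A : Type*} [CommRing A] (𝒥 : RedStruct n)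
    (F : Term n → MvPolynomial (Fin n) A) : Prop :=
  IsCompl (Submodule.restrictScalars A (Ideal.span (F '' ↑𝒥.M))) (NJSpan 𝒥 A)

/-- A representation of `g` by `σF`: `g = Σ c_(α,η) · x^η f_α` over finitely many
distinct pairs `(α, η)` with `x^α ∈ M`, `x^η ∈ σ_α` and nonzero coefficients. -/
def IsRepr {A : Type*} [CommRing A] (𝒥 : RedStruct n) (σ : Term n → Set (Term n))
    (F : Term n → MvPolynomial (Fin n) A) (c : (Term n × Term n) →₀ A)
    (g : MvPolynomial (Fin n) A) : Prop :=
  (∀ p ∈ c.support, p.1 ∈ 𝒥.M ∧ p.2 ∈ σ p.1) ∧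
    g = c.sum fun p a => MvPolynomial.monomial p.2 a * F p.1

/-- The S-polynomial `S(f_β, f_α) = (lcm(x^α,x^β)/x^α) f_α − (lcm(x^α,x^β)/x^β) f_β`,
written `SPoly F α β`. -/
noncomputable def SPoly {A : Type*} [CommRing A] (F : Term n → MvPolynomial (Fin n) A) (α β : Term n) :
    MvPolynomial (Fin n) A :=
  MvPolynomial.monomial ((α ⊔ β) - α) (1 : A) * F α -
    MvPolynomial.monomial ((α ⊔ β) - β) (1 : A) * F β

/-! Reductions only subtract elements of `⟨τF⟩ ⊆ (F)`, and weak noetherianity makes reduced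
forms exist, so `g - l ∈ (F)` for every reduced form `l` of `g`; this gives confluence for a
marked basis and `P = (F) + ⟨N(J)⟩`. Under confluence, `g` and `g + x^η a f_α` (`x^η ∈ τ_α`)
reduce in at most one step to a common polynomial, so they have the same reduced form; hence
every element of `⟨τF⟩` reduces to `0`, and `⟨τF⟩ ∩ ⟨N(J)⟩ = 0`. Condition (c) says that also
the products `x^γ f_α` with `x^γ ∉ τ_α` lie in `⟨τF⟩`, i.e. that `⟨τF⟩` is the ideal `(F)`. -/

def IsConfluent {A : Type*} [CommRing A] (𝒥 : RedStruct n)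
    (F : Term n → MvPolynomial (Fin n) A) : Prop :=
  ∀ g : MvPolynomial (Fin n) A, ∃! l, IsReducedPoly 𝒥 l ∧ RedStar 𝒥 F g l

theorem RelNoetherian.exists_normalForm {X : Type*} {r : X → X → Prop} (hr : RelNoetherian r)
    (x : X) : ∃ y, Relation.ReflTransGen r x y ∧ ∀ z, ¬ r y z := by
  have hwf : WellFounded (flip r) :=
    wellFounded_iff_isEmpty_descending_chain.2 ⟨fun ⟨f, hf⟩ => hr ⟨f, hf⟩⟩
  obtain ⟨y, hy, hmin⟩ := hwf.has_min {y | Relation.ReflTransGen r x y} ⟨x, .refl⟩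
  exact ⟨y, hy, fun z hz => hmin z (hy.tail hz) hz⟩

namespace RedStruct

theorem IsSubstructure.idealJ_eq {𝒥' 𝒥 : RedStruct n} (h : 𝒥'.IsSubstructure 𝒥) :
    𝒥'.idealJ = 𝒥.idealJ := by
  simp only [idealJ, h.1]

end RedStruct

section Reduction

variable {A : Type*} [CommRing A] {𝒥 : RedStruct n} {F : Term n → MvPolynomial (Fin n) A}

theorem IsMarkedSet.of_isSubstructure {𝒥' : RedStruct n} (h : 𝒥'.IsSubstructure 𝒥)
    (hF : IsMarkedSet 𝒥 F) : IsMarkedSet 𝒥' F := by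
  intro α hα
  rw [h.1] at hα
  exact ⟨(hF α hα).1, fun β hβ => h.2.1 ▸ (hF α hα).2 β hβ⟩

theorem Red.of_isSubstructure {𝒥' : RedStruct n} (h : 𝒥'.IsSubstructure 𝒥)
    {g g' : MvPolynomial (Fin n) A} (hr : Red 𝒥' F g g') : Red 𝒥 F g g' := by
  obtain ⟨α, hα, η, hη, hc, rfl⟩ := hr
  rw [h.1] at hα
  exact ⟨α, hα, η, h.2.2 α hα hη, hc, rfl⟩

theorem isReducedPoly_of_forall_not_red {g : MvPolynomial (Fin n) A}
    (hg : ∀ g', ¬ Red 𝒥 F g g') : IsReducedPoly 𝒥 g := by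
  rintro β hβ hβJ
  obtain ⟨α, hα, η, hη, rfl⟩ := (𝒥.cover β).1 hβJ
  exact hg _ ⟨α, hα, η, hη, mem_support_iff.1 hβ, rfl⟩

theorem exists_isReducedPoly_redStar (hwn : 𝒥.IsWeaklyNoetherianOver A) (hF : IsMarkedSet 𝒥 F)
    (g : MvPolynomial (Fin n) A) : ∃ l, IsReducedPoly 𝒥 l ∧ RedStar 𝒥 F g l := by
  obtain ⟨𝒥', hsub, hnoeth⟩ := hwn
  obtain ⟨l, hgl, hl⟩ := (hnoeth F (hF.of_isSubstructure hsub)).exists_normalForm g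
  refine ⟨l, ?_, Relation.ReflTransGen.mono (fun _ _ => Red.of_isSubstructure hsub) _ _ hgl⟩
  intro β hβ
  rw [← hsub.idealJ_eq]
  exact isReducedPoly_of_forall_not_red hl β hβ

theorem monomial_mul_eq_smul (η : Term n) (a : A) (p : MvPolynomial (Fin n) A) :
    monomial η a * p = a • (monomial η 1 * p) := by
  rw [← smul_mul_assoc, smul_monomial, smul_eq_mul, mul_one]

theorem monomial_mul_mem_tauSpan {α η : Term n} (hα : α ∈ 𝒥.M) (hη : η ∈ 𝒥.tau α) (a : A) :
    monomial η a * F α ∈ tauSpan 𝒥 𝒥.tau F := by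
  rw [monomial_mul_eq_smul]
  exact Submodule.smul_mem _ _ (Submodule.subset_span ⟨α, hα, η, hη, rfl⟩)

theorem sub_mem_tauSpan_of_redStar {g l : MvPolynomial (Fin n) A} (h : RedStar 𝒥 F g l) :
    g - l ∈ tauSpan 𝒥 𝒥.tau F := by
  induction h with
  | refl => simp
  | tail _ hstep ih =>
    obtain ⟨α, hα, η, hη, -, rfl⟩ := hstep
    rw [sub_sub_eq_add_sub, add_sub_right_comm]
    exact Submodule.add_mem _ ih (monomial_mul_mem_tauSpan hα hη _)

theorem tauSpan_le_span_marked :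
    tauSpan 𝒥 𝒥.tau F ≤ (Ideal.span (F '' ↑𝒥.M)).restrictScalars A := by
  rw [tauSpan, Submodule.span_le]
  rintro _ ⟨α, hα, η, -, rfl⟩
  exact Ideal.mul_mem_left _ _ (Ideal.subset_span ⟨α, hα, rfl⟩)

theorem isReducedPoly_iff_mem_NJSpan {l : MvPolynomial (Fin n) A} :
    IsReducedPoly 𝒥 l ↔ l ∈ NJSpan 𝒥 A := by
  constructor
  · intro hl
    rw [l.as_sum]
    refine Submodule.sum_mem _ fun β hβ => ?_
    rw [← mul_one (coeff β l), ← smul_eq_mul, ← smul_monomial]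
    exact Submodule.smul_mem _ _ (Submodule.subset_span ⟨β, hl β hβ, rfl⟩)
  · intro hl
    induction hl using Submodule.span_induction with
    | mem x hx =>
      obtain ⟨β, hβ, rfl⟩ := hx
      intro γ hγ
      rwa [Finset.mem_singleton.1 (support_monomial_subset hγ)]
    | zero => simp [IsReducedPoly]
    | add x y _ _ hx hy =>
      intro β hβ
      rcases Finset.mem_union.1 (support_add hβ) with h | h
      exacts [hx β h, hy β h]
    | smul a x _ hx => exact fun β hβ => hx β (Finsupp.support_smul hβ)

theorem IsMarkedBasis.isConfluent (hb : IsMarkedBasis 𝒥 F) (hwn : 𝒥.IsWeaklyNoetherianOver A)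
    (hF : IsMarkedSet 𝒥 F) : IsConfluent 𝒥 F := by
  intro g
  obtain ⟨l, hl, hgl⟩ := exists_isReducedPoly_redStar hwn hF g
  refine ⟨l, ⟨hl, hgl⟩, fun l' ⟨hl', hgl'⟩ => ?_⟩
  have hideal : l' - l ∈ (Ideal.span (F '' ↑𝒥.M)).restrictScalars A := by
    rw [← sub_sub_sub_cancel_left l l' g]
    exact Submodule.sub_mem _ (tauSpan_le_span_marked (sub_mem_tauSpan_of_redStar hgl))
      (tauSpan_le_span_marked (sub_mem_tauSpan_of_redStar hgl'))
  have hNJ : l' - l ∈ NJSpan 𝒥 A :=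
    Submodule.sub_mem _ (isReducedPoly_iff_mem_NJSpan.1 hl') (isReducedPoly_iff_mem_NJSpan.1 hl)
  exact sub_eq_zero.1 (Submodule.disjoint_def.1 hb.disjoint _ hideal hNJ)

theorem eq_zero_of_redStar_zero {l : MvPolynomial (Fin n) A} (h : RedStar 𝒥 F 0 l) : l = 0 := by
  rcases Relation.ReflTransGen.cases_head h with h | ⟨_, ⟨_, _, _, _, hc, _⟩, _⟩
  · exact h.symm
  · simp at hc

theorem redStar_sub_monomial_mul {α η : Term n} (hα : α ∈ 𝒥.M)
    (hη : η ∈ 𝒥.tau α) (g : MvPolynomial (Fin n) A) :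
    RedStar 𝒥 F g (g - monomial η (coeff (α + η) g) * F α) := by
  by_cases h0 : coeff (α + η) g = 0
  · rw [h0, monomial_zero, zero_mul, sub_zero]
    exact .refl
  · exact .single ⟨α, hα, η, hη, h0, rfl⟩

theorem redStar_add_monomial_mul (hF : IsMarkedSet 𝒥 F) {α η : Term n} (hα : α ∈ 𝒥.M)
    (hη : η ∈ 𝒥.tau α) (a : A) (g : MvPolynomial (Fin n) A) :
    RedStar 𝒥 F (g + monomial η a * F α) (g - monomial η (coeff (α + η) g) * F α) := by
  have hcoeff : coeff (α + η) (g + monomial η a * F α) = coeff (α + η) g + a := by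
    rw [coeff_add, add_comm α, coeff_monomial_mul, (hF α hα).1, mul_one]
  convert redStar_sub_monomial_mul hα hη (g + monomial η a * F α) using 1
  rw [hcoeff, map_add]
  ring

namespace IsConfluent

theorem redStar_iff_of_redStar (hc : IsConfluent 𝒥 F) {g g' l : MvPolynomial (Fin n) A}
    (hgg' : RedStar 𝒥 F g g') (hl : IsReducedPoly 𝒥 l) :
    RedStar 𝒥 F g l ↔ RedStar 𝒥 F g' l := by
  obtain ⟨l', ⟨hl', hg'l'⟩, -⟩ := hc g'
  have hgl' : RedStar 𝒥 F g l' := hgg'.trans hg'l'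
  constructor
  · intro hgl
    rwa [(hc g).unique ⟨hl, hgl⟩ ⟨hl', hgl'⟩]
  · intro hg'l
    rwa [(hc g').unique ⟨hl, hg'l⟩ ⟨hl', hg'l'⟩]

theorem redStar_add_iff (hc : IsConfluent 𝒥 F) (hF : IsMarkedSet 𝒥 F)
    {x : MvPolynomial (Fin n) A} (hx : x ∈ tauSpan 𝒥 𝒥.tau F) (g : MvPolynomial (Fin n) A)
    {l : MvPolynomial (Fin n) A} (hl : IsReducedPoly 𝒥 l) :
    RedStar 𝒥 F (g + x) l ↔ RedStar 𝒥 F g l := by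
  -- The scalar `a` makes this set of invariant summands closed under scalar multiplication.
  let S : Submodule A (MvPolynomial (Fin n) A) :=
    { carrier := {x | ∀ (a : A) g l, IsReducedPoly 𝒥 l →
        (RedStar 𝒥 F (g + a • x) l ↔ RedStar 𝒥 F g l)}
      add_mem' := fun {x y} hx hy a g l hl => by
        rw [smul_add, ← add_assoc, hy a _ l hl, hx a g l hl]
      zero_mem' := fun a g l _ => by rw [smul_zero, add_zero]
      smul_mem' := fun b x hx a g l hl => by rw [smul_smul, hx _ g l hl] }
  have hle : tauSpan 𝒥 𝒥.tau F ≤ S := by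
    rw [tauSpan, Submodule.span_le]
    rintro _ ⟨α, hα, η, hη, rfl⟩ a g l hl
    rw [← monomial_mul_eq_smul, hc.redStar_iff_of_redStar (redStar_sub_monomial_mul hα hη g) hl,
      hc.redStar_iff_of_redStar (redStar_add_monomial_mul hF hα hη a g) hl]
  simpa using hle hx 1 g l hl

theorem eq_zero_of_mem_tauSpan (hc : IsConfluent 𝒥 F) (hF : IsMarkedSet 𝒥 F)
    {x l : MvPolynomial (Fin n) A} (hx : x ∈ tauSpan 𝒥 𝒥.tau F) (hl : IsReducedPoly 𝒥 l)
    (hxl : RedStar 𝒥 F x l) : l = 0 :=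
  eq_zero_of_redStar_zero ((hc.redStar_add_iff hF hx 0 hl).1 (by rwa [zero_add]))

theorem isMarkedBasis_iff (hc : IsConfluent 𝒥 F) (hF : IsMarkedSet 𝒥 F) :
    IsMarkedBasis 𝒥 F ↔ (Ideal.span (F '' ↑𝒥.M)).restrictScalars A = tauSpan 𝒥 𝒥.tau F := by
  constructor
  · intro hb
    refine le_antisymm (fun g hg => ?_) tauSpan_le_span_marked
    obtain ⟨l, ⟨hl, hgl⟩, -⟩ := hc g
    have hl0 : l = 0 := by
      refine Submodule.disjoint_def.1 hb.disjoint _ ?_ (isReducedPoly_iff_mem_NJSpan.1 hl)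
      rw [← sub_sub_cancel g l]
      exact Submodule.sub_mem _ hg (tauSpan_le_span_marked (sub_mem_tauSpan_of_redStar hgl))
    simpa [hl0] using sub_mem_tauSpan_of_redStar hgl
  · intro heq
    constructor
    · rw [Submodule.disjoint_def, heq]
      exact fun x hx hNJ =>
        hc.eq_zero_of_mem_tauSpan hF hx (isReducedPoly_iff_mem_NJSpan.2 hNJ) .refl
    · rw [codisjoint_iff, eq_top_iff]
      intro g _
      obtain ⟨l, ⟨hl, hgl⟩, -⟩ := hc g
      exact Submodule.mem_sup.2 ⟨g - l, tauSpan_le_span_marked (sub_mem_tauSpan_of_redStar hgl),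
        l, isReducedPoly_iff_mem_NJSpan.1 hl, sub_add_cancel g l⟩

theorem monomial_mul_mem_tauSpan (hc : IsConfluent 𝒥 F) {α : Term n} (hα : α ∈ 𝒥.M)
    (hzero : ∀ γ ∉ 𝒥.tau α, ∀ l, IsReducedPoly 𝒥 l → RedStar 𝒥 F (monomial γ 1 * F α) l → l = 0)
    (γ : Term n) : monomial γ (1 : A) * F α ∈ tauSpan 𝒥 𝒥.tau F := by
  by_cases hγ : γ ∈ 𝒥.tau α
  · exact _root_.monomial_mul_mem_tauSpan hα hγ 1
  · obtain ⟨l, ⟨hl, hxl⟩, -⟩ := hc (monomial γ 1 * F α)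
    simpa [hzero γ hγ l hl hxl] using sub_mem_tauSpan_of_redStar hxl

end IsConfluent

theorem mul_mem_tauSpan {α : Term n}
    (h : ∀ γ, monomial γ (1 : A) * F α ∈ tauSpan 𝒥 𝒥.tau F) (p : MvPolynomial (Fin n) A) :
    p * F α ∈ tauSpan 𝒥 𝒥.tau F := by
  induction p using MvPolynomial.induction_on' with
  | monomial γ a => exact monomial_mul_eq_smul γ a (F α) ▸ Submodule.smul_mem _ a (h γ)
  | add p q hp hq => exact (add_mul p q (F α)).symm ▸ Submodule.add_mem _ hp hq

-- The hypothesis makes `⟨τF⟩` an ideal containing `F`.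
theorem span_marked_le_tauSpan (h : ∀ α ∈ 𝒥.M, ∀ p, p * F α ∈ tauSpan 𝒥 𝒥.tau F) :
    (Ideal.span (F '' ↑𝒥.M)).restrictScalars A ≤ tauSpan 𝒥 𝒥.tau F := by
  have hmul : ∀ (p : MvPolynomial (Fin n) A), ∀ x ∈ tauSpan 𝒥 𝒥.tau F,
      p * x ∈ tauSpan 𝒥 𝒥.tau F := by
    intro p x hx
    refine (Submodule.span_le (p := (tauSpan 𝒥 𝒥.tau F).comap (LinearMap.mulLeft A p))).2 ?_ hx
    rintro _ ⟨α, hα, η, -, rfl⟩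
    simpa [← mul_assoc] using h α hα (p * monomial η 1)
  let I : Ideal (MvPolynomial (Fin n) A) :=
    { carrier := tauSpan 𝒥 𝒥.tau F
      add_mem' := Submodule.add_mem _
      zero_mem' := Submodule.zero_mem _
      smul_mem' := hmul }
  refine fun g hg => (Ideal.span_le (I := I)).2 ?_ hg
  rintro _ ⟨α, hα, rfl⟩
  show F α ∈ tauSpan 𝒥 𝒥.tau F
  simpa using h α hα 1

end Reduction

/-- over a weakly noetherian RS, a marked basis yields a confluent
reduction; and assuming confluency, being a marked basis is equivalent to
`(F) = ⟨τF⟩` and to all complete reductions of `x^γ f_α`, `x^γ ∉ τ_α`, ending in `0`. -/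
theorem stmt12 {n : ℕ} {A : Type} [CommRing A] (𝒥 : RedStruct n)
    (hwn : 𝒥.IsWeaklyNoetherianOver A)
    (F : Term n → MvPolynomial (Fin n) A) (hF : IsMarkedSet 𝒥 F) :
    (IsMarkedBasis 𝒥 F →
      ∀ g : MvPolynomial (Fin n) A,
        ∃! l : MvPolynomial (Fin n) A, IsReducedPoly 𝒥 l ∧ RedStar 𝒥 F g l) ∧
    ((∀ g : MvPolynomial (Fin n) A,
        ∃! l : MvPolynomial (Fin n) A, IsReducedPoly 𝒥 l ∧ RedStar 𝒥 F g l) →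
      ((IsMarkedBasis 𝒥 F ↔
          Submodule.restrictScalars A (Ideal.span (F '' ↑𝒥.M)) = tauSpan 𝒥 𝒥.tau F) ∧
       (IsMarkedBasis 𝒥 F ↔
          ∀ α ∈ 𝒥.M, ∀ γ : Term n, γ ∉ 𝒥.tau α →
            ∀ l : MvPolynomial (Fin n) A, IsReducedPoly 𝒥 l →
              RedStar 𝒥 F (MvPolynomial.monomial γ (1 : A) * F α) l → l = 0))) := by
  refine ⟨fun hb => hb.isConfluent hwn hF, fun hc => ?_⟩
  replace hc : IsConfluent 𝒥 F := hc
  refine ⟨hc.isMarkedBasis_iff hF, ?_⟩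
  rw [hc.isMarkedBasis_iff hF]
  constructor
  · intro heq α hα γ _ l hl hxl
    refine hc.eq_zero_of_mem_tauSpan hF ?_ hl hxl
    rw [← heq]
    exact Ideal.mul_mem_left _ _ (Ideal.subset_span ⟨α, hα, rfl⟩)
  · intro hzero
    refine le_antisymm (span_marked_le_tauSpan fun α hα => ?_) tauSpan_le_span_marked
    exact mul_mem_tauSpan (hc.monomial_mul_mem_tauSpan hα (hzero α hα))
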